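/- arXiv:0705.2095 — 9 statements merged into one kernel-verified Lean document; each statement's English description precedes it below -/
import Mathlib

section
/- Let ψ be a character of the algebra 𝒜 of periodic functions on ℤ whose restrictions to the subalgebras 𝒜_m and 𝒜_n are both nonzero, and let κ(m;ψ), κ(n;ψ) be the unique integers in [0,m) and [0,n) respectively with ψ(u) = u(κ(m;ψ)) for all u ∈ 𝒜_m and ψ(u) = u(κ(n;ψ)) for all u ∈ 𝒜_n. Then κ(m;ψ) ≡ κ(n;ψ) (mod gcd(m,n)). -/
open Function

noncomputable section

/-- The subalgebra of `ℤ → ℂ` consisting of all periodic functions. -/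
def PerFun : Subalgebra ℂ (ℤ → ℂ) where
  carrier := {u | ∃ p : ℤ, 0 < p ∧ Function.Periodic u p}
  add_mem' := by
    rintro u v ⟨p, hp, hu⟩ ⟨q, hq, hv⟩
    refine ⟨p * q, mul_pos hp hq, ?_⟩
    have hu' : Function.Periodic u (p * q) := by simpa [mul_comm] using hu.int_mul q
    have hv' : Function.Periodic v (p * q) := hv.int_mul p
    exact hu'.add hv'
  mul_mem' := by
    rintro u v ⟨p, hp, hu⟩ ⟨q, hq, hv⟩
    refine ⟨p * q, mul_pos hp hq, ?_⟩
    have hu' : Function.Periodic u (p * q) := by simpa [mul_comm] using hu.int_mul q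
    have hv' : Function.Periodic v (p * q) := hv.int_mul p
    exact hu'.mul hv'
  one_mem' := ⟨1, one_pos, fun _ => rfl⟩
  zero_mem' := ⟨1, one_pos, fun _ => rfl⟩
  algebraMap_mem' := fun c => ⟨1, one_pos, fun _ => rfl⟩

/-- `u` belongs to the subalgebra `𝒜_p` of `p`-periodic functions. -/
def InAp (p : ℤ) (u : ↥PerFun) : Prop := Function.Periodic (u : ℤ → ℂ) p

/-- A character of the algebra `𝒜` of periodic functions: a nonzero
`ℂ`-linear multiplicative functional. -/
def IsChar (ψ : ↥PerFun → ℂ) : Prop :=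
  (∀ u v, ψ (u + v) = ψ u + ψ v) ∧
  (∀ (c : ℂ) (u), ψ (c • u) = c * ψ u) ∧
  (∀ u v, ψ (u * v) = ψ u * ψ v) ∧
  ψ ≠ 0

lemma shiftAdd_mem (u : ↥PerFun) (x : ℤ) :
    (fun y => (u : ℤ → ℂ) (x + y)) ∈ PerFun := by
  obtain ⟨p, hp, hu⟩ := u.2
  refine ⟨p, hp, fun y => ?_⟩
  show (u : ℤ → ℂ) (x + (y + p)) = (u : ℤ → ℂ) (x + y)
  rw [← add_assoc]
  exact hu (x + y)

/-- For `u ∈ 𝒜`, the function `y ↦ u (x + y)`, as an element of `𝒜`. -/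
def shiftAdd (u : ↥PerFun) (x : ℤ) : ↥PerFun :=
  ⟨fun y => (u : ℤ → ℂ) (x + y), shiftAdd_mem u x⟩

lemma shiftMul_mem (u : ↥PerFun) (x : ℤ) :
    (fun y => (u : ℤ → ℂ) (x * y)) ∈ PerFun := by
  obtain ⟨p, hp, hu⟩ := u.2
  refine ⟨p, hp, fun y => ?_⟩
  show (u : ℤ → ℂ) (x * (y + p)) = (u : ℤ → ℂ) (x * y)
  rw [mul_add]
  exact (hu.int_mul x) (x * y)

/-- For `u ∈ 𝒜`, the function `y ↦ u (x * y)`, as an element of `𝒜`. -/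
def shiftMul (u : ↥PerFun) (x : ℤ) : ↥PerFun :=
  ⟨fun y => (u : ℤ → ℂ) (x * y), shiftMul_mem u x⟩

lemma negArg_mem (u : ↥PerFun) :
    (fun y => (u : ℤ → ℂ) (-y)) ∈ PerFun := by
  obtain ⟨p, hp, hu⟩ := u.2
  refine ⟨p, hp, fun y => ?_⟩
  show (u : ℤ → ℂ) (-(y + p)) = (u : ℤ → ℂ) (-y)
  rw [neg_add, ← sub_eq_add_neg]
  exact hu.sub_eq (-y)

/-- For `u ∈ 𝒜`, the function `x ↦ u (-x)`, as an element of `𝒜`. -/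
def negArg (u : ↥PerFun) : ↥PerFun :=
  ⟨fun y => (u : ℤ → ℂ) (-y), negArg_mem u⟩

lemma plusInner_mem (ψ : ↥PerFun → ℂ) (u : ↥PerFun) :
    (fun x => ψ (shiftAdd u x)) ∈ PerFun := by
  obtain ⟨p, hp, hu⟩ := u.2
  refine ⟨p, hp, fun x => ?_⟩
  show ψ (shiftAdd u (x + p)) = ψ (shiftAdd u x)
  congr 1
  apply Subtype.ext
  funext y
  show (u : ℤ → ℂ) (x + p + y) = (u : ℤ → ℂ) (x + y)
  rw [show x + p + y = x + y + p by ring]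
  exact hu (x + y)

lemma dotInner_mem (ψ : ↥PerFun → ℂ) (u : ↥PerFun) :
    (fun x => ψ (shiftMul u x)) ∈ PerFun := by
  obtain ⟨p, hp, hu⟩ := u.2
  refine ⟨p, hp, fun x => ?_⟩
  show ψ (shiftMul u (x + p)) = ψ (shiftMul u x)
  congr 1
  apply Subtype.ext
  funext y
  show (u : ℤ → ℂ) ((x + p) * y) = (u : ℤ → ℂ) (x * y)
  rw [show (x + p) * y = x * y + y * p by ring]
  exact (hu.int_mul y) (x * y)

/-- The plus-convolution `(φ ⊕ ψ)(u) = φ (x ↦ ψ (y ↦ u (x + y)))`. -/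
def plusConv (φ ψ : ↥PerFun → ℂ) : ↥PerFun → ℂ :=
  fun u => φ ⟨fun x => ψ (shiftAdd u x), plusInner_mem ψ u⟩

/-- The dot-convolution `(φ ⊙ ψ)(u) = φ (x ↦ ψ (y ↦ u (x * y)))`. -/
def dotConv (φ ψ : ↥PerFun → ℂ) : ↥PerFun → ℂ :=
  fun u => φ ⟨fun x => ψ (shiftMul u x), dotInner_mem ψ u⟩

/-- The reflection `(⊖ φ)(u) = φ (x ↦ u (-x))`. -/
def reflect (φ : ↥PerFun → ℂ) : ↥PerFun → ℂ :=
  fun u => φ (negArg u)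

/-- The functional `θ : u ↦ u 0`. -/
def theta : ↥PerFun → ℂ := fun u => (u : ℤ → ℂ) 0

/-- The functional `ε : u ↦ u 1`. -/
def eps : ↥PerFun → ℂ := fun u => (u : ℤ → ℂ) 1

/-! Every `gcd m n`-periodic function lies in both `𝒜_m` and `𝒜_n`, so it takes the same value
at `κ(m;ψ)` and at `κ(n;ψ)`; an indicator of a residue class modulo `gcd m n` then forces the
congruence. -/

variable {M : Type*}

theorem Function.Periodic.of_dvd {f : ℤ → M} {g p : ℤ} (hf : Periodic f g) (hgp : g ∣ p) :
    Periodic f p := by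
  obtain ⟨t, rfl⟩ := hgp
  simpa only [Int.cast_id, mul_comm] using hf.int_mul t

theorem Int.ModEq.of_forall_periodic_eq [Nontrivial M] {g a b : ℤ}
    (h : ∀ f : ℤ → M, Periodic f g → f a = f b) : a ≡ b [ZMOD g] := by
  classical
  obtain ⟨x, y, hxy⟩ := exists_pair_ne M
  have hper : Periodic (fun z => if z ≡ a [ZMOD g] then x else y) g := fun z => by
    simp only [Int.add_modulus_modEq_iff]
  have hb := h _ hper
  rw [if_pos (Int.ModEq.refl a)] at hb
  split_ifs at hb with hba
  · exact hba.symm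
  · exact absurd hb hxy

theorem char_kappa_congruent_mod_gcd_general
    (ψ : ↥PerFun → ℂ) (m n : ℤ) (hm : 0 < m)
    (km kn : ℤ)
    (hkm : ∀ u, InAp m u → ψ u = (u : ℤ → ℂ) km)
    (hkn : ∀ u, InAp n u → ψ u = (u : ℤ → ℂ) kn) :
    km ≡ kn [ZMOD Int.gcd m n] := by
  have hg : 0 < (Int.gcd m n : ℤ) := mod_cast Int.gcd_pos_of_ne_zero_left n hm.ne'
  refine Int.ModEq.of_forall_periodic_eq (M := ℂ) fun f hf => ?_
  let u : ↥PerFun := ⟨f, _, hg, hf⟩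
  calc f km = ψ u := (hkm u (hf.of_dvd (Int.gcd_dvd_left m n))).symm
    _ = f kn := hkn u (hf.of_dvd (Int.gcd_dvd_right m n))

/-- If the restrictions of a character `ψ` to `𝒜_m` and `𝒜_n` are both nonzero,
with `ψ = eval at κ(m;ψ)` on `𝒜_m` and `ψ = eval at κ(n;ψ)` on `𝒜_n`, then
`κ(m;ψ) ≡ κ(n;ψ) (mod gcd m n)`. -/
theorem char_kappa_congruent_mod_gcd
    (ψ : ↥PerFun → ℂ) (hψ : IsChar ψ) (m n : ℤ) (hm : 0 < m) (hn : 0 < n)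
    (hm0 : ∃ u, InAp m u ∧ ψ u ≠ 0) (hn0 : ∃ u, InAp n u ∧ ψ u ≠ 0)
    (km kn : ℤ) (hkm0 : 0 ≤ km) (hkm1 : km < m)
    (hkm : ∀ u, InAp m u → ψ u = (u : ℤ → ℂ) km)
    (hkn0 : 0 ≤ kn) (hkn1 : kn < n)
    (hkn : ∀ u, InAp n u → ψ u = (u : ℤ → ℂ) kn) :
    km ≡ kn [ZMOD Int.gcd m n] :=
  char_kappa_congruent_mod_gcd_general ψ m n hm km kn hkm hkn

end
end

section
/- The set 𝒢 of all characters of the algebra 𝒜 of periodic functions on ℤ is closed under the plus-convolution φ⊕ψ, the dot-convolution φ⊙ψ, and the reflection ⊖φ: if φ and ψ are characters, then φ⊕ψ, φ⊙ψ and ⊖φ are again characters of 𝒜. -/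
open Function

noncomputable section

/-! A character is the same thing as a unital algebra homomorphism `𝒜 →ₐ[ℂ] ℂ`, since
multiplicativity and `ψ ≠ 0` force `ψ 1 = 1`. Precomposition with `y ↦ x + y`, `y ↦ x * y` or
`y ↦ -y` is an algebra endomorphism of `𝒜`, and so is `u ↦ (x ↦ χₓ u)` for any family of
characters `χₓ` whose values are periodic in `x`. Each convolution is, definitionally, a character
composed with such an endomorphism. -/

namespace IsChar

variable {ψ : ↥PerFun → ℂ}

theorem map_one (h : IsChar ψ) : ψ 1 = 1 := by
  obtain ⟨-, -, hmul, hne⟩ := h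
  by_contra h1
  refine hne (funext fun u => ?_)
  have hu1 := hmul u 1
  rw [mul_one] at hu1
  have hu : ψ u * (1 - ψ 1) = 0 := by linear_combination hu1
  exact (mul_eq_zero.1 hu).resolve_right (sub_ne_zero.2 (Ne.symm h1))

def toAlgHom (h : IsChar ψ) : ↥PerFun →ₐ[ℂ] ℂ :=
  AlgHom.ofLinearMap ⟨⟨ψ, h.1⟩, h.2.1⟩ h.map_one h.2.2.1

theorem of_algHom (χ : ↥PerFun →ₐ[ℂ] ℂ) : IsChar χ :=
  ⟨map_add χ, map_smul χ, map_mul χ,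
    fun h => one_ne_zero <| (_root_.map_one χ).symm.trans (congrFun h 1)⟩

theorem comp_algHom (h : IsChar ψ) (F : ↥PerFun →ₐ[ℂ] ↥PerFun) : IsChar (ψ ∘ F) :=
  of_algHom (h.toAlgHom.comp F)

end IsChar

namespace PerFun

def precomp (f : ℤ → ℤ) (hf : ∀ u : ↥PerFun, (fun y => (u : ℤ → ℂ) (f y)) ∈ PerFun) :
    ↥PerFun →ₐ[ℂ] ↥PerFun :=
  ((AlgHom.pi fun y => Pi.evalAlgHom ℂ (fun _ => ℂ) (f y)).comp PerFun.val).codRestrict PerFun hf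

def pi (χ : ℤ → ↥PerFun →ₐ[ℂ] ℂ) (hχ : ∀ u, (fun x => χ x u) ∈ PerFun) :
    ↥PerFun →ₐ[ℂ] ↥PerFun :=
  (AlgHom.pi χ).codRestrict PerFun hχ

end PerFun

/-- The set `𝒢` of characters of `𝒜` is closed under the plus-convolution, the
dot-convolution and the reflection. -/
theorem characters_closed_under_convolutions
    (φ ψ : ↥PerFun → ℂ) (hφ : IsChar φ) (hψ : IsChar ψ) :
    IsChar (plusConv φ ψ) ∧ IsChar (dotConv φ ψ) ∧ IsChar (reflect φ) :=
  ⟨hφ.comp_algHom <| PerFun.pi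
      (fun x => hψ.toAlgHom.comp (PerFun.precomp (x + ·) (shiftAdd_mem · x))) (plusInner_mem ψ),
    hφ.comp_algHom <| PerFun.pi
      (fun x => hψ.toAlgHom.comp (PerFun.precomp (x * ·) (shiftMul_mem · x))) (dotInner_mem ψ),
    hφ.comp_algHom <| PerFun.precomp Neg.neg negArg_mem⟩

end
end

section
/- For every character ψ of 𝒜, every positive integer n, and every real number R with 0 < R < 1, the cluster V_n(ψ) admits the representation V_n(ψ) = ⋂_{j=0}^{n−1} U_R(e^n_j; ψ), where U_R(u;ψ) = {φ ∈ 𝒢 : |φ(u) − ψ(u)| < R} and e^n_j ∈ 𝒜_n is the indicator function of the set {k ∈ ℤ : k ≡ j (mod n)}. -/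
open Function

noncomputable section

/-- The indicator `e^n_j ∈ 𝒜_n` of the raster `{k ∈ ℤ : k ≡ j (mod n)}`,
as an element of `𝒜`. -/
def eInd (n j : ℤ) (hn : 0 < n) : ↥PerFun :=
  ⟨fun k => if k % n = j % n then 1 else 0,
   ⟨n, hn, fun k => by
      have h : (k + n) % n = k % n := by
        simpa using Int.add_mul_emod_self_left (a := k) (b := n) (c := 1)
      simp [h]⟩⟩

/-- The subbasic Gelfand neighborhood `U_R(u;ψ) = {φ ∈ 𝒢 : |φ u − ψ u| < R}`. -/
def Uball (R : ℝ) (u : ↥PerFun) (ψ : ↥PerFun → ℂ) : Set (↥PerFun → ℂ) :=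
  {φ | IsChar φ ∧ ‖φ u - ψ u‖ < R}

/-!
A character sends an idempotent to `0` or `1`, so two characters whose values on the idempotents
`e^n_j` differ by less than `1` agree on them. Every `u ∈ 𝒜_n` is the combination
`∑ j, u j • e^n_j`, so by linearity the two characters then agree on all of `𝒜_n`.
-/

def IsChar.toLinearMap {ψ : ↥PerFun → ℂ} (hψ : IsChar ψ) : ↥PerFun →ₗ[ℂ] ℂ where
  toFun := ψ
  map_add' := hψ.1
  map_smul' := hψ.2.1

lemma IsChar.apply_eq_zero_or_one {ψ : ↥PerFun → ℂ} (hψ : IsChar ψ) {u : ↥PerFun}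
    (hu : IsIdempotentElem u) : ψ u = 0 ∨ ψ u = 1 :=
  IsIdempotentElem.iff_eq_zero_or_one.mp <| by
    rw [IsIdempotentElem, ← hψ.2.2.1, hu.eq]

lemma IsChar.apply_eq_of_norm_sub_lt_one {φ ψ : ↥PerFun → ℂ} (hφ : IsChar φ) (hψ : IsChar ψ)
    {u : ↥PerFun} (hu : IsIdempotentElem u) (hlt : ‖φ u - ψ u‖ < 1) : φ u = ψ u := by
  rcases hφ.apply_eq_zero_or_one hu with h | h <;>
    rcases hψ.apply_eq_zero_or_one hu with h' | h' <;>
    simp_all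

lemma eInd_apply (n j : ℤ) (hn : 0 < n) (k : ℤ) :
    (eInd n j hn : ℤ → ℂ) k = if k % n = j % n then 1 else 0 :=
  rfl

lemma eInd_isIdempotentElem (n j : ℤ) (hn : 0 < n) : IsIdempotentElem (eInd n j hn) := by
  ext k
  simp only [PerFun.coe_mul, Pi.mul_apply, eInd_apply]
  split_ifs <;> simp

lemma inAp_eInd (n j : ℤ) (hn : 0 < n) : InAp n (eInd n j hn) := by
  intro k
  simp only [eInd_apply, Int.add_emod_right]

lemma InAp.eq_sum_smul_eInd {n : ℤ} (hn : 0 < n) {u : ↥PerFun} (hu : InAp n u) :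
    u = ∑ j ∈ Finset.Ico (0 : ℤ) n, (u : ℤ → ℂ) j • eInd n j hn := by
  ext k
  have hk : k % n ∈ Finset.Ico 0 n :=
    Finset.mem_Ico.mpr ⟨Int.emod_nonneg k hn.ne', Int.emod_lt_of_pos k hn⟩
  calc (u : ℤ → ℂ) k = (u : ℤ → ℂ) (k % n) := by
        rw [Int.emod_def, mul_comm, ← smul_eq_mul, hu.sub_zsmul_eq]
    _ = ∑ j ∈ Finset.Ico (0 : ℤ) n, (u : ℤ → ℂ) j * if k % n = j then 1 else 0 := by
        simp [hk]
    _ = _ := by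
        simp only [AddSubmonoidClass.coe_finsetSum, Subalgebra.coe_smul, Finset.sum_apply,
          Pi.smul_apply, smul_eq_mul, eInd_apply]
        refine Finset.sum_congr rfl fun j hj => ?_
        obtain ⟨hj0, hjn⟩ := Finset.mem_Ico.mp hj
        rw [Int.emod_eq_of_lt hj0 hjn]

lemma IsChar.eqOn_inAp_of_eq_eInd {φ ψ : ↥PerFun → ℂ} (hφ : IsChar φ) (hψ : IsChar ψ)
    {n : ℤ} (hn : 0 < n) (h : ∀ j ∈ Set.Ico (0 : ℤ) n, φ (eInd n j hn) = ψ (eInd n j hn))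
    {u : ↥PerFun} (hu : InAp n u) : φ u = ψ u := by
  change hφ.toLinearMap u = hψ.toLinearMap u
  rw [hu.eq_sum_smul_eInd hn, map_sum, map_sum]
  refine Finset.sum_congr rfl fun j hj => ?_
  rw [map_smul, map_smul]
  exact congrArg _ (h j (Finset.coe_Ico 0 n ▸ hj))

/-- For every character `ψ`, positive integer `n` and `0 < R < 1`, the cluster
`V_n(ψ)` is the intersection `⋂_{0 ≤ j < n} U_R(e^n_j; ψ)`. -/
theorem cluster_eq_iInter_Uball
    (ψ : ↥PerFun → ℂ) (hψ : IsChar ψ) (n : ℤ) (hn : 0 < n)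
    (R : ℝ) (hR0 : 0 < R) (hR1 : R < 1) :
    {φ | IsChar φ ∧ ∀ u, InAp n u → φ u = ψ u}
      = ⋂ j ∈ Set.Ico (0 : ℤ) n, Uball R (eInd n j hn) ψ := by
  ext φ
  simp only [Set.mem_ofPred_eq, Set.mem_iInter, Uball]
  constructor
  · rintro ⟨hφ, hagree⟩ j -
    rw [hagree _ (inAp_eInd n j hn), sub_self, norm_zero]
    exact ⟨hφ, hR0⟩
  · intro h
    have hφ : IsChar φ := (h 0 ⟨le_rfl, hn⟩).1
    refine ⟨hφ, fun u hu => hφ.eqOn_inAp_of_eq_eInd hψ hn (fun j hj => ?_) hu⟩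
    exact hφ.apply_eq_of_norm_sub_lt_one hψ (eInd_isIdempotentElem n j hn)
      ((h j hj).2.trans hR1)

end
end

section
/- On the set 𝒢 of characters of the algebra 𝒜 of periodic functions on ℤ, the Gelfand topology (the topology generated by the subbase of all sets U_R(u;ψ) = {φ ∈ 𝒢 : |φ(u) − ψ(u)| < R} with u ∈ 𝒜, ψ ∈ 𝒢, R > 0, i.e., the topology of pointwise convergence on 𝒜) coincides with the cluster topology, namely the topology for which, at each point ψ ∈ 𝒢, the clusters V_n(ψ) = {φ ∈ 𝒢 : φ = ψ on 𝒜_n}, n ∈ ℕ⁺, form a base of neighborhoods of ψ. -/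
open Function

noncomputable section

/-- The set of characters `𝒢`, as a type. -/
def Gchar := {ψ : ↥PerFun → ℂ // IsChar ψ}

/-- The Gelfand topology on `𝒢`: generated by the subbase of all sets
`U_R(u;ψ) = {φ ∈ 𝒢 : |φ u − ψ u| < R}` with `u ∈ 𝒜`, `ψ ∈ 𝒢`, `R > 0`,
i.e. the topology of pointwise convergence on `𝒜`. -/
def gelfandTop : TopologicalSpace Gchar :=
  TopologicalSpace.generateFrom
    {S | ∃ (u : ↥PerFun) (ψ : Gchar) (R : ℝ), 0 < R ∧
      S = {φ : Gchar | ‖φ.1 u - ψ.1 u‖ < R}}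

/-- The cluster topology on `𝒢`: the topology for which at each point `ψ` the
clusters `V_n(ψ) = {φ ∈ 𝒢 : φ = ψ on 𝒜_n}`, `n ∈ ℕ⁺`, form a base of
neighborhoods of `ψ`; equivalently, the topology generated by all clusters. -/
def clusterTop : TopologicalSpace Gchar :=
  TopologicalSpace.generateFrom
    {S | ∃ (n : ℤ) (ψ : Gchar), 0 < n ∧
      S = {φ : Gchar | ∀ u, InAp n u → φ.1 u = ψ.1 u}}

/-! Every `u ∈ 𝒜` lies in some `𝒜_p`, and then `V_p(φ) ⊆ U_R(u;ψ)` for every `φ ∈ U_R(u;ψ)`: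
Gelfand open sets are cluster open. Conversely, `𝒜_n` is spanned by the `n` indicators of residue
classes mod `n`; these are idempotents, so characters take the values `0` and `1` on them, and
`V_n(ψ)` is the finite intersection of the sets `U_1(e;ψ)` over these indicators `e`. -/

theorem Function.Periodic.map_emod {α : Type*} {u : ℤ → α} {n : ℤ} (hu : Periodic u n) (x : ℤ) :
    u (x % n) = u x := by
  simpa [Int.emod_def, mul_comm] using hu.sub_int_mul_eq (x := x) (x / n)

namespace IsChar

variable {ψ : ↥PerFun → ℂ}

def toLinearMap_s9 (h : IsChar ψ) : ↥PerFun →ₗ[ℂ] ℂ where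
  toFun := ψ
  map_add' := h.1
  map_smul' := h.2.1

theorem map_eq_zero_or_one (h : IsChar ψ) {e : ↥PerFun} (he : IsIdempotentElem e) :
    ψ e = 0 ∨ ψ e = 1 :=
  IsIdempotentElem.iff_eq_zero_or_one.mp <| by
    rw [IsIdempotentElem, ← h.2.2.1, he.eq]

end IsChar

def residueIndicator (n j : ℤ) : ℤ → ℂ := fun x => if x % n = j % n then 1 else 0

theorem periodic_residueIndicator (n j : ℤ) : Periodic (residueIndicator n j) n := by
  intro x
  simp only [residueIndicator, Int.add_emod_right]

def residueIndicatorP {n : ℤ} (hn : 0 < n) (j : ℤ) : ↥PerFun :=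
  ⟨residueIndicator n j, n, hn, periodic_residueIndicator n j⟩

theorem inAp_residueIndicatorP {n : ℤ} (hn : 0 < n) (j : ℤ) : InAp n (residueIndicatorP hn j) :=
  periodic_residueIndicator n j

theorem isIdempotentElem_residueIndicatorP {n : ℤ} (hn : 0 < n) (j : ℤ) :
    IsIdempotentElem (residueIndicatorP hn j) := by
  apply Subtype.ext
  funext x
  change residueIndicator n j x * residueIndicator n j x = residueIndicator n j x
  unfold residueIndicator
  split_ifs <;> simp

theorem eq_sum_smul_residueIndicatorP {n : ℤ} (hn : 0 < n) {u : ↥PerFun} (hu : InAp n u) :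
    u = ∑ j ∈ Finset.Ico 0 n, (u : ℤ → ℂ) j • residueIndicatorP hn j := by
  apply Subtype.ext
  funext x
  have hx : x % n ∈ Finset.Ico 0 n :=
    Finset.mem_Ico.mpr ⟨Int.emod_nonneg x hn.ne', Int.emod_lt_of_pos x hn⟩
  have hsingle : ∀ j ∈ Finset.Ico 0 n, j ≠ x % n → (u : ℤ → ℂ) j * residueIndicator n j x = 0 := by
    intro j hj hne
    obtain ⟨hj0, hjn⟩ := Finset.mem_Ico.mp hj
    simp [residueIndicator, Int.emod_eq_of_lt hj0 hjn, hne.symm]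
  rw [AddSubmonoidClass.coe_finsetSum, Finset.sum_apply]
  change (u : ℤ → ℂ) x = ∑ j ∈ Finset.Ico 0 n, (u : ℤ → ℂ) j * residueIndicator n j x
  rw [Finset.sum_eq_single_of_mem _ hx hsingle, hu.map_emod]
  simp [residueIndicator, Int.emod_emod_of_dvd]

theorem IsChar.eq_of_residueIndicatorP {φ ψ : ↥PerFun → ℂ} (hφ : IsChar φ) (hψ : IsChar ψ)
    {n : ℤ} (hn : 0 < n)
    (he : ∀ j ∈ Finset.Ico 0 n, φ (residueIndicatorP hn j) = ψ (residueIndicatorP hn j))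
    {u : ↥PerFun} (hu : InAp n u) : φ u = ψ u := by
  change hφ.toLinearMap_s9 u = hψ.toLinearMap_s9 u
  rw [eq_sum_smul_residueIndicatorP hn hu, map_sum, map_sum]
  refine Finset.sum_congr rfl fun j hj => ?_
  rw [map_smul, map_smul]
  exact congrArg _ (he j hj)

theorem eq_of_norm_sub_lt_one_of_mem_zero_one {a b : ℂ} (ha : a = 0 ∨ a = 1) (hb : b = 0 ∨ b = 1)
    (hab : ‖a - b‖ < 1) : a = b := by
  rcases ha with rfl | rfl <;> rcases hb with rfl | rfl <;> first | rfl | norm_num at hab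

theorem cluster_eq_iInter {n : ℤ} (hn : 0 < n) (ψ : Gchar) :
    {φ : Gchar | ∀ u, InAp n u → φ.1 u = ψ.1 u} =
      ⋂ j ∈ Finset.Ico 0 n,
        {φ : Gchar | ‖φ.1 (residueIndicatorP hn j) - ψ.1 (residueIndicatorP hn j)‖ < 1} := by
  ext φ
  simp only [Set.mem_ofPred_eq, Set.mem_iInter]
  refine ⟨fun h j _ => by simp [h _ (inAp_residueIndicatorP hn j)], fun h u hu => ?_⟩
  refine φ.2.eq_of_residueIndicatorP ψ.2 hn (fun j hj => ?_) hu
  have hidem := isIdempotentElem_residueIndicatorP hn j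
  exact eq_of_norm_sub_lt_one_of_mem_zero_one (φ.2.map_eq_zero_or_one hidem)
    (ψ.2.map_eq_zero_or_one hidem) (h j hj)

theorem gelfandTop_le_clusterTop : gelfandTop ≤ clusterTop := by
  let _ : TopologicalSpace Gchar := gelfandTop
  refine le_generateFrom ?_
  rintro S ⟨n, ψ, hn, rfl⟩
  rw [cluster_eq_iInter hn ψ]
  exact isOpen_biInter_finset fun j _ =>
    TopologicalSpace.isOpen_generateFrom_of_mem ⟨residueIndicatorP hn j, ψ, 1, one_pos, rfl⟩

theorem clusterTop_le_gelfandTop : clusterTop ≤ gelfandTop := by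
  let _ : TopologicalSpace Gchar := clusterTop
  refine le_generateFrom ?_
  rintro S ⟨u, ψ, R, -, rfl⟩
  refine isOpen_iff_forall_mem_open.mpr fun φ hφ => ?_
  obtain ⟨p, hp, hup⟩ := u.2
  refine ⟨{χ : Gchar | ∀ v, InAp p v → χ.1 v = φ.1 v}, fun χ hχ => ?_,
    TopologicalSpace.isOpen_generateFrom_of_mem ⟨p, φ, hp, rfl⟩, fun _ _ => rfl⟩
  simpa [Set.mem_ofPred_eq, hχ u hup] using hφ

/-- On the set `𝒢` of characters of `𝒜`, the Gelfand topology coincides with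
the cluster topology. -/
theorem gelfandTop_eq_clusterTop : gelfandTop = clusterTop :=
  le_antisymm gelfandTop_le_clusterTop clusterTop_le_gelfandTop

end
end

section
/- In the ring 𝒫 of polyadic numbers, for all positive integers m and n the principal ideals satisfy 𝒢^(m) ∩ 𝒢^(n) = 𝒢^(lcm(m,n)), where 𝒢^(k) = {k·α : α ∈ 𝒫}. -/
open Filter

/-- `α` is a `0`-sequence: every positive integer divides `α k`
for all but finitely many `k`. -/
def IsZeroSeq (α : ℕ → ℤ) : Prop :=
  ∀ n : ℤ, 0 < n → ∀ᶠ k in Filter.cofinite, n ∣ α k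

/-- `α ≡ Sα`: the sequence `α` represents a polyadic number. -/
def RepsPolyadic (α : ℕ → ℤ) : Prop :=
  IsZeroSeq (fun k => α k - α (k + 1))

/-- The ideal `𝒞₀` of `0`-sequences in the ring `𝒞` of integer sequences. -/
def C0 : Ideal (ℕ → ℤ) where
  carrier := {α | IsZeroSeq α}
  add_mem' := by
    intro a b ha hb n hn
    filter_upwards [ha n hn, hb n hn] with k h1 h2
    exact dvd_add h1 h2
  zero_mem' := by
    intro n hn
    exact Filter.Eventually.of_forall fun k => dvd_zero n
  smul_mem' := by
    intro c a ha n hn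
    filter_upwards [ha n hn] with k h
    exact h.mul_left (c k)

/-- The quotient ring `𝒞 ⧸ 𝒞₀`. -/
abbrev CQuot := (ℕ → ℤ) ⧸ C0

/-- The ring `𝒫` of polyadic numbers: the subring of `𝒞 ⧸ 𝒞₀` consisting
of the classes containing a sequence `α` with `α ≡ Sα`. -/
def Polyadic : Subring CQuot where
  carrier := {x | ∃ α : ℕ → ℤ, RepsPolyadic α ∧ Ideal.Quotient.mk C0 α = x}
  zero_mem' := by
    refine ⟨0, ?_, map_zero _⟩
    intro n hn
    exact Filter.Eventually.of_forall fun k => by simp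
  one_mem' := by
    refine ⟨1, ?_, map_one _⟩
    intro n hn
    exact Filter.Eventually.of_forall fun k => by simp [Pi.one_apply]
  add_mem' := by
    rintro x y ⟨a, ha, rfl⟩ ⟨b, hb, rfl⟩
    refine ⟨a + b, ?_, map_add _ _ _⟩
    intro n hn
    filter_upwards [ha n hn, hb n hn] with k h1 h2
    have : (a + b) k - (a + b) (k + 1)
        = (a k - a (k + 1)) + (b k - b (k + 1)) := by
      simp [Pi.add_apply]; ring
    rw [this]
    exact dvd_add h1 h2
  neg_mem' := by
    rintro x ⟨a, ha, rfl⟩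
    refine ⟨-a, ?_, map_neg _ _⟩
    intro n hn
    filter_upwards [ha n hn] with k h1
    have : (-a) k - (-a) (k + 1) = -(a k - a (k + 1)) := by
      simp [Pi.neg_apply]; ring
    rw [this]
    exact h1.neg_right
  mul_mem' := by
    rintro x y ⟨a, ha, rfl⟩ ⟨b, hb, rfl⟩
    refine ⟨a * b, ?_, map_mul _ _ _⟩
    intro n hn
    filter_upwards [ha n hn, hb n hn] with k h1 h2
    have : (a * b) k - (a * b) (k + 1)
        = a k * (b k - b (k + 1)) + b (k + 1) * (a k - a (k + 1)) := by
      simp [Pi.mul_apply]; ring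
    rw [this]
    exact dvd_add (h2.mul_left (a k)) (h1.mul_left (b (k + 1)))

/-- The principal ideal `𝒢⁽ᵏ⁾ = {k·α : α ∈ 𝒫}` of the polyadic ring, as a set. -/
def GIdl (p : ℤ) : Set ↥Polyadic := {x | ∃ y : ↥Polyadic, x = (p : ↥Polyadic) * y}

/-- The grid `𝒢(p;a) = {a + γ : γ ∈ 𝒢⁽ᵖ⁾}`. -/
def Grid (p : ℤ) (a : ↥Polyadic) : Set ↥Polyadic := {x | ∃ γ ∈ GIdl p, x = a + γ}

/-- The canonical embedding `𝒵 : ℤ → 𝒫`, sending `m` to the class of the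
constant sequence with value `m`. -/
def Zemb (m : ℤ) : ↥Polyadic :=
  ⟨Ideal.Quotient.mk C0 (fun _ => m),
   ⟨fun _ => m, fun n hn => Filter.Eventually.of_forall fun k => by simp, rfl⟩⟩

/-! A polyadic number divisible by both `m` and `n` is divisible by `lcm m n` for the reason
it is in any commutative ring: writing `m = g m'`, `n = g n'` with `g = gcd m n` and
`u m' + v n' = 1`, both `m' x` and `n' x` are multiples of `lcm m n = g m' n'`, hence so is
`x = u m' x + v n' x`. -/

theorem IsCoprime.dvd_of_dvd_mul_of_dvd_mul {R : Type*} [CommSemiring R] {a b c x : R}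
    (hab : IsCoprime a b) (ha : c ∣ a * x) (hb : c ∣ b * x) : c ∣ x := by
  obtain ⟨u, v, huv⟩ := hab
  have hx : x = u * (a * x) + v * (b * x) := by
    calc x = (u * a + v * b) * x := by rw [huv, one_mul]
      _ = u * (a * x) + v * (b * x) := by ring
  exact hx ▸ dvd_add (ha.mul_left u) (hb.mul_left v)

theorem Int.cast_lcm_dvd {R : Type*} [CommRing R] {m n : ℤ} {x : R}
    (hm : (m : R) ∣ x) (hn : (n : R) ∣ x) : ((m.lcm n : ℤ) : R) ∣ x := by
  rcases Nat.eq_zero_or_pos (m.gcd n) with hgcd | hgcd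
  · obtain ⟨rfl, rfl⟩ := Int.gcd_eq_zero_iff.mp hgcd
    simpa using hm
  obtain ⟨g, m', n', -, hcop, rfl, rfl⟩ := Int.exists_gcd_one' hgcd
  have hlcm : ((m' * g).lcm (n' * g) : ℤ) ∣ m' * n' * g := by
    rw [Int.coe_lcm]
    exact _root_.lcm_dvd ⟨n', by ring⟩ ⟨m', by ring⟩
  refine (Int.isCoprime_iff_gcd_eq_one.mpr hcop).intCast.dvd_of_dvd_mul_of_dvd_mul ?_ ?_
  · obtain ⟨b, rfl⟩ := hn
    exact (Int.cast_dvd_cast _ _ hlcm).trans ⟨b, by push_cast; ring⟩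
  · obtain ⟨a, rfl⟩ := hm
    exact (Int.cast_dvd_cast _ _ hlcm).trans ⟨a, by push_cast; ring⟩

theorem Int.cast_lcm_dvd_iff {R : Type*} [CommRing R] {m n : ℤ} {x : R} :
    ((m.lcm n : ℤ) : R) ∣ x ↔ (m : R) ∣ x ∧ (n : R) ∣ x :=
  ⟨fun h => ⟨(Int.cast_dvd_cast _ _ (Int.dvd_lcm_left m n)).trans h,
      (Int.cast_dvd_cast _ _ (Int.dvd_lcm_right m n)).trans h⟩,
    fun h => Int.cast_lcm_dvd h.1 h.2⟩

theorem GIdl_inter_GIdl_general (m n : ℤ) :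
    GIdl m ∩ GIdl n = GIdl (Int.lcm m n) := by
  ext x
  exact Int.cast_lcm_dvd_iff.symm

/-- In the polyadic ring `𝒫`, the principal ideals satisfy
`𝒢⁽ᵐ⁾ ∩ 𝒢⁽ⁿ⁾ = 𝒢⁽ˡᶜᵐ⁽ᵐ,ⁿ⁾⁾` for all positive integers `m`, `n`. -/
theorem GIdl_inter_GIdl (m n : ℤ) (hm : 0 < m) (hn : 0 < n) :
    GIdl m ∩ GIdl n = GIdl (Int.lcm m n) :=
  GIdl_inter_GIdl_general m n
end

section
/- The subring 𝒵 of integer polyadic numbers (the image of the canonical embedding 𝒵 : ℤ → 𝒫 sending m to the class of the constant sequence with value m) is dense in the polyadic ring 𝒫 with the topology σ: every grid 𝒢(n;α), for n a positive integer and α ∈ 𝒫, contains an integer polyadic number. -/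
open Filter

/-! A polyadic number is represented by a sequence `α` that is eventually constant modulo `n`,
say `α k ≡ α K [ZMOD n]` for `k ≥ K`. Then `α K - α` is eventually divisible by `n`, and dividing
it by `n` termwise again gives a polyadic number, so `𝒵 (α K) - α ∈ 𝒢⁽ⁿ⁾`. -/

theorem RepsPolyadic.const_sub {α : ℕ → ℤ} (hα : RepsPolyadic α) (m : ℤ) :
    RepsPolyadic fun k => m - α k := by
  intro d hd
  filter_upwards [hα d hd] with k hk
  simpa using hk.neg_right

theorem RepsPolyadic.exists_modEq {α : ℕ → ℤ} (hα : RepsPolyadic α) {n : ℤ} (hn : 0 < n) :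
    ∃ K, ∀ k ≥ K, α k ≡ α K [ZMOD n] := by
  obtain ⟨K, hK⟩ := eventually_atTop.mp (Nat.cofinite_eq_atTop ▸ hα n hn)
  refine ⟨K, fun k hk => ?_⟩
  induction k, hk using Nat.le_induction with
  | base => rfl
  | succ k hk ih => exact (Int.modEq_iff_dvd.mpr (hK k hk)).trans ih

theorem RepsPolyadic.ediv {α : ℕ → ℤ} (hα : RepsPolyadic α) {n : ℤ} (hn : n ≠ 0)
    (hdvd : ∀ᶠ k in cofinite, n ∣ α k) : RepsPolyadic fun k => α k / n := by
  intro d hd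
  have hdvd_succ : ∀ᶠ k in cofinite, n ∣ α (k + 1) := by
    rw [Nat.cofinite_eq_atTop] at hdvd ⊢
    exact (tendsto_add_atTop_nat 1).eventually hdvd
  filter_upwards [hα |n * d| (by positivity), hdvd_succ] with k hdiff hsucc
  rw [← Int.sub_ediv_of_dvd _ hsucc]
  exact Int.dvd_div_of_mul_dvd ((abs_dvd _ _).mp hdiff)

theorem mk_C0_eq_of_eventuallyEq {α β : ℕ → ℤ} (h : α =ᶠ[cofinite] β) :
    Ideal.Quotient.mk C0 α = Ideal.Quotient.mk C0 β := by
  rw [Ideal.Quotient.eq]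
  intro d _
  filter_upwards [h] with k hk
  simp [hk]

theorem mem_GIdl_of_eventually_dvd {n : ℤ} (hn : n ≠ 0) {x : ↥Polyadic} {γ : ℕ → ℤ}
    (hγ : RepsPolyadic γ) (hx : Ideal.Quotient.mk C0 γ = x)
    (hdvd : ∀ᶠ k in cofinite, n ∣ γ k) : x ∈ GIdl n := by
  refine ⟨⟨_, _, hγ.ediv hn hdvd, rfl⟩, Subtype.ext ?_⟩
  have hγ_eq : γ =ᶠ[cofinite] (n : ℕ → ℤ) * fun k => γ k / n := by
    filter_upwards [hdvd] with k hk
    exact (Int.mul_ediv_cancel' hk).symm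
  rw [← hx, mk_C0_eq_of_eventuallyEq hγ_eq, map_mul, map_intCast]
  rfl

/-- The subring of integer polyadic numbers is dense in `(𝒫, σ)`: every grid
`𝒢(n;α)`, `n` a positive integer, `α ∈ 𝒫`, contains an integer polyadic number. -/
theorem integer_polyadic_dense (n : ℤ) (hn : 0 < n) (a : ↥Polyadic) :
    ∃ m : ℤ, Zemb m ∈ Grid n a := by
  obtain ⟨α, hα, hαa⟩ := a.2
  obtain ⟨K, hK⟩ := hα.exists_modEq hn
  refine ⟨α K, Zemb (α K) - a, ?_, (add_sub_cancel a _).symm⟩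
  refine mem_GIdl_of_eventually_dvd hn.ne' (hα.const_sub (α K)) ?_ ?_
  · rw [AddSubgroupClass.coe_sub, ← hαa]
    rfl
  · rw [Nat.cofinite_eq_atTop, eventually_atTop]
    exact ⟨K, fun k hk => Int.modEq_iff_dvd.mp (hK k hk)⟩
end

section
/- Division with remainder holds in the polyadic ring: for every positive integer n, each polyadic number α can be uniquely written as α = n·γ + 𝒵(r), where γ ∈ 𝒫 and r is an integer with 0 ≤ r ≤ n−1 (𝒵(r) being the integer polyadic number with value r). -/
open Filter

/-! Since `n ∣ α k - α (k + 1)` for large `k`, the residue of `α k` modulo `n` is eventually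
a constant `r ∈ [0, n)`, and `β k = (α k - r) / n` then represents a polyadic `γ` with
`α = n γ + r`. For uniqueness, `𝒫` has no `n`-torsion (divide the congruences defining `𝒞₀`
by `n`), and `𝒵(s) ∈ n 𝒫` forces `n ∣ s`, because the constant sequence `s` agrees modulo `n`
with a multiple of `n` at some index. -/

namespace IsZeroSeq

lemma of_eventuallyEq {α β : ℕ → ℤ} (hα : IsZeroSeq α) (h : α =ᶠ[cofinite] β) :
    IsZeroSeq β := fun m hm => (hα m hm).congr (h.mono fun _ hk => by rw [hk])

lemma of_eventuallyEq_zero {α : ℕ → ℤ} (h : α =ᶠ[cofinite] 0) : IsZeroSeq α :=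
  (C0.zero_mem : IsZeroSeq 0).of_eventuallyEq h.symm

lemma of_mul_left {n : ℤ} (hn : 0 < n) {β : ℕ → ℤ} (h : IsZeroSeq fun k => n * β k) :
    IsZeroSeq β := fun m hm =>
  (h (n * m) (mul_pos hn hm)).mono fun _ hk => (mul_dvd_mul_iff_left hn.ne').mp hk

end IsZeroSeq

lemma RepsPolyadic.exists_eventually_dvd_sub {α : ℕ → ℤ} (hα : RepsPolyadic α) {n : ℤ}
    (hn : 0 < n) : ∃ r, 0 ≤ r ∧ r < n ∧ ∀ᶠ k in cofinite, n ∣ α k - r := by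
  obtain ⟨N, hN⟩ := eventually_atTop.mp (Nat.cofinite_eq_atTop ▸ hα n hn)
  refine ⟨α N % n, Int.emod_nonneg _ hn.ne', Int.emod_lt_of_pos _ hn, ?_⟩
  rw [Nat.cofinite_eq_atTop, eventually_atTop]
  refine ⟨N, fun k hk => ?_⟩
  induction k, hk using Nat.le_induction with
  | base => exact Int.dvd_self_sub_emod
  | succ k hk ih => simpa using dvd_sub ih (hN k hk)

namespace Polyadic

lemma coe_intCast (m : ℤ) :
    ((m : ↥Polyadic) : CQuot) = Ideal.Quotient.mk C0 (fun _ => m) := by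
  rw [Subring.coe_intCast, ← map_intCast (Ideal.Quotient.mk C0) m]
  rfl

lemma zemb_eq_intCast (m : ℤ) : Zemb m = (m : ↥Polyadic) :=
  Subtype.ext (coe_intCast m).symm

lemma eq_zero_of_intCast_mul_eq_zero {n : ℤ} (hn : 0 < n) {γ : ↥Polyadic}
    (h : (n : ↥Polyadic) * γ = 0) : γ = 0 := by
  obtain ⟨β, -, hβ⟩ := γ.2
  have h' := congrArg Subtype.val h
  rw [Subring.coe_mul, coe_intCast, ← hβ, ← map_mul, Subring.coe_zero,
    Ideal.Quotient.eq_zero_iff_mem] at h'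
  exact Subtype.ext (hβ ▸ Ideal.Quotient.eq_zero_iff_mem.mpr (IsZeroSeq.of_mul_left hn h'))

lemma dvd_of_intCast_eq_intCast_mul {n s : ℤ} (hn : 0 < n) {γ : ↥Polyadic}
    (h : (s : ↥Polyadic) = n * γ) : n ∣ s := by
  obtain ⟨β, -, hβ⟩ := γ.2
  have h' := congrArg Subtype.val h
  rw [Subring.coe_mul, coe_intCast, coe_intCast, ← hβ, ← map_mul, Ideal.Quotient.eq] at h'
  obtain ⟨k, hk⟩ := (h' n hn).exists
  simpa using dvd_add hk (dvd_mul_right n (β k))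

lemma exists_eq_intCast_mul_add_of_eventually_dvd_sub {α : ℕ → ℤ} (hα : RepsPolyadic α)
    {n r : ℤ} (hn : 0 < n) (hr : ∀ᶠ k in cofinite, n ∣ α k - r) :
    ∃ γ : ↥Polyadic, Ideal.Quotient.mk C0 α = ((n * γ + r : ↥Polyadic) : CQuot) := by
  set β : ℕ → ℤ := fun k => (α k - r) / n
  have hβ : ∀ᶠ k in cofinite, n * β k = α k - r :=
    hr.mono fun k hk => Int.mul_ediv_cancel' hk
  have hβreps : RepsPolyadic β := by
    refine IsZeroSeq.of_mul_left hn (hα.of_eventuallyEq ?_)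
    filter_upwards [hβ, (add_left_injective 1).tendsto_cofinite.eventually hβ] with k h0 h1
    rw [mul_sub, h0, h1]
    ring
  refine ⟨⟨Ideal.Quotient.mk C0 β, β, hβreps, rfl⟩, ?_⟩
  rw [Subring.coe_add, Subring.coe_mul, coe_intCast, coe_intCast, ← map_mul, ← map_add,
    Ideal.Quotient.eq]
  refine IsZeroSeq.of_eventuallyEq_zero (hβ.mono fun k hk => ?_)
  simp [hk]

lemma eq_of_intCast_mul_add_eq {n : ℤ} (hn : 0 < n) {γ γ' : ↥Polyadic} {r r' : ℤ}
    (hr : 0 ≤ r ∧ r < n) (hr' : 0 ≤ r' ∧ r' < n)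
    (h : (n : ↥Polyadic) * γ + r = n * γ' + r') : γ = γ' ∧ r = r' := by
  have hdiff : ((r - r' : ℤ) : ↥Polyadic) = n * (γ' - γ) := by
    push_cast
    linear_combination h
  have hrr : r = r' := sub_eq_zero.mp <| Int.eq_zero_of_abs_lt_dvd
    (dvd_of_intCast_eq_intCast_mul hn hdiff) (abs_sub_lt_of_nonneg_of_lt hr.1 hr.2 hr'.1 hr'.2)
  subst hrr
  refine ⟨(sub_eq_zero.mp (eq_zero_of_intCast_mul_eq_zero hn ?_)).symm, rfl⟩
  simpa using hdiff.symm

lemma exists_eq_intCast_mul_add {n : ℤ} (hn : 0 < n) (a : ↥Polyadic) :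
    ∃ γ : ↥Polyadic, ∃ r, (0 ≤ r ∧ r < n) ∧ a = n * γ + r := by
  obtain ⟨α, hα, ha⟩ := a.2
  obtain ⟨r, hr0, hrn, hr⟩ := hα.exists_eventually_dvd_sub hn
  obtain ⟨γ, hγ⟩ := exists_eq_intCast_mul_add_of_eventually_dvd_sub hα hn hr
  exact ⟨γ, r, ⟨hr0, hrn⟩, Subtype.ext (ha ▸ hγ)⟩

end Polyadic

/-- Division with remainder in the polyadic ring: for every positive integer `n`,
each polyadic number `a` is uniquely of the form `a = n·γ + 𝒵(r)` with `γ ∈ 𝒫`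
and `0 ≤ r ≤ n - 1`. -/
theorem polyadic_division_with_remainder (n : ℤ) (hn : 0 < n) (a : ↥Polyadic) :
    ∃! gr : ↥Polyadic × ℤ, (0 ≤ gr.2 ∧ gr.2 ≤ n - 1) ∧
      a = (n : ↥Polyadic) * gr.1 + Zemb gr.2 := by
  simp only [Polyadic.zemb_eq_intCast, Int.le_sub_one_iff]
  obtain ⟨γ, r, hr, rfl⟩ := Polyadic.exists_eq_intCast_mul_add hn a
  refine ⟨(γ, r), ⟨hr, rfl⟩, fun ⟨γ', r'⟩ ⟨hr', h⟩ => ?_⟩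
  obtain ⟨rfl, rfl⟩ := Polyadic.eq_of_intCast_mul_add_eq hn hr' hr h.symm
  rfl
end

section
/- A sequence of polyadic numbers α^(n) converges in the topological ring (𝒫, σ) (i.e., there exists α ∈ 𝒫 such that every zero neighborhood 𝒢^(p) contains α^(n) − α for all but finitely many n) if and only if the consecutive differences α^(n) − α^(n+1) converge to zero, i.e., for every positive integer p, α^(n) − α^(n+1) ∈ 𝒢^(p) for all but finitely many n. -/
open Filter

/-!
Whether a polyadic number lies in `𝒢⁽ᵖ⁾` can be read off any representative: it does iff
`p` divides almost all of its terms. Since the `𝒢⁽ᵖ⁾` are ideals, consecutive differences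
tending to zero make the sequence Cauchy, and along a subsequence `B k` we get
`B k ≡ B (k + 1)` mod `k!`. A representative of the limit is then the diagonal
`k ↦ β k (M k)`, where `β k` represents `B k` and `M k` is so large that `β k` has
stabilised mod `k!` and agrees mod `i!` with `β i` for all `i ≤ k`.
-/

open Nat

theorem dvd_sub_of_forall_dvd_sub_succ {R : Type*} [NonUnitalRing R] {a : R} {f : ℕ → R}
    {N : ℕ} (h : ∀ n ≥ N, a ∣ f n - f (n + 1)) {n : ℕ} (hn : N ≤ n) :
    a ∣ f N - f n := by
  induction n, hn using Nat.le_induction with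
  | base => simp
  | succ n hNn ih => simpa using dvd_add ih (h n hNn)

theorem eventually_intCast_dvd_factorial {q : ℤ} (hq : 0 < q) :
    ∀ᶠ k in atTop, q ∣ (k ! : ℤ) := by
  lift q to ℕ using hq.le
  filter_upwards [eventually_ge_atTop q] with k hk
  exact Int.natCast_dvd_natCast.2 (Nat.dvd_factorial (by exact_mod_cast hq) hk)

theorem RepsPolyadic.eventually_forall_dvd_sub {α : ℕ → ℤ} (h : RepsPolyadic α) {q : ℤ}
    (hq : 0 < q) : ∀ᶠ S in atTop, ∀ j ≥ S, ∀ j' ≥ S, q ∣ α j - α j' := by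
  obtain ⟨S₀, hS₀⟩ := eventually_atTop.1 (Nat.cofinite_eq_atTop ▸ h q hq)
  filter_upwards [eventually_ge_atTop S₀] with S hS j hj j' hj'
  simpa using dvd_sub (dvd_sub_of_forall_dvd_sub_succ hS₀ (hS.trans hj'))
    (dvd_sub_of_forall_dvd_sub_succ hS₀ (hS.trans hj))

theorem RepsPolyadic.of_mk_eq {δ : ℕ → ℤ} {x : ↥Polyadic}
    (h : Ideal.Quotient.mk C0 δ = x) : RepsPolyadic δ := by
  obtain ⟨α, hα, hαx⟩ := x.2
  have hαδ : α - δ ∈ C0 := Ideal.Quotient.eq.1 (hαx.trans h.symm)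
  intro n hn
  filter_upwards [hα n hn, hαδ n hn,
    (add_left_injective 1).tendsto_cofinite.eventually (hαδ n hn)] with k h₁ h₂ h₃
  have : δ k - δ (k + 1) = (α k - α (k + 1)) - (α - δ) k + (α - δ) (k + 1) := by
    simp only [Pi.sub_apply]; ring
  rw [this]
  exact dvd_add (dvd_sub h₁ h₂) h₃

namespace Polyadic

theorem mem_GIdl_iff_dvd {p : ℤ} {x : ↥Polyadic} : x ∈ GIdl p ↔ (p : ↥Polyadic) ∣ x :=
  Iff.rfl

theorem mk_intCast_mul (p : ℤ) (η : ℕ → ℤ) :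
    Ideal.Quotient.mk C0 ((p : ℕ → ℤ) * η) =
      ((p : ↥Polyadic) : CQuot) * Ideal.Quotient.mk C0 η := by
  simp

theorem intCast_dvd_iff {p : ℤ} (hp : 0 < p) {δ : ℕ → ℤ} {x : ↥Polyadic}
    (h : Ideal.Quotient.mk C0 δ = x) :
    (p : ↥Polyadic) ∣ x ↔ ∀ᶠ j in cofinite, p ∣ δ j := by
  constructor
  · rintro ⟨y, rfl⟩
    obtain ⟨η, hη⟩ := Ideal.Quotient.mk_surjective (y : CQuot)
    have : δ - (p : ℕ → ℤ) * η ∈ C0 := by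
      rw [← Ideal.Quotient.eq, h, mk_intCast_mul, hη]
      rfl
    filter_upwards [this p hp] with j hj
    exact (dvd_sub_left (dvd_mul_right p (η j))).1 (by simpa using hj)
  · intro hδ
    have hpη : ∀ᶠ j in cofinite, p * (δ j / p) = δ j := by
      filter_upwards [hδ] with j hj
      exact Int.mul_ediv_cancel' hj
    have hη : RepsPolyadic (δ / (p : ℕ → ℤ)) := by
      intro n hn
      filter_upwards [hpη, (add_left_injective 1).tendsto_cofinite.eventually hpη,
        RepsPolyadic.of_mk_eq h (p * n) (mul_pos hp hn)] with j hj hj' hjn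
      rw [← hj, ← hj', ← mul_sub] at hjn
      exact (mul_dvd_mul_iff_left hp.ne').1 hjn
    refine ⟨⟨_, _, hη, rfl⟩, Subtype.ext ?_⟩
    rw [← h, Subring.coe_mul, ← mk_intCast_mul, Ideal.Quotient.eq]
    intro n hn
    filter_upwards [hpη] with j hj
    simp [hj]

theorem exists_forall_factorial_dvd_sub {B : ℕ → ↥Polyadic}
    (hB : ∀ k, ((k ! : ℤ) : ↥Polyadic) ∣ B k - B (k + 1)) :
    ∃ b : ↥Polyadic, ∀ k, ((k ! : ℤ) : ↥Polyadic) ∣ B k - b := by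
  have hB' : ∀ k l, k ≤ l → ((k ! : ℤ) : ↥Polyadic) ∣ B k - B l := fun k _ hkl =>
    dvd_sub_of_forall_dvd_sub_succ (fun i hi =>
      (Int.cast_dvd_cast _ _ (by exact_mod_cast factorial_dvd_factorial hi)).trans (hB i)) hkl
  choose β hβ using fun k => Ideal.Quotient.mk_surjective (B k : CQuot)
  have hT : ∀ l, ∃ T, (∀ j ≥ T, ∀ k ≤ l, (k ! : ℤ) ∣ β k j - β l j) ∧
      ∀ j ≥ T, ∀ j' ≥ T, (l ! : ℤ) ∣ β l j - β l j' := by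
    intro l
    have hclose : ∀ᶠ j in atTop, ∀ k ≤ l, (k ! : ℤ) ∣ β k j - β l j := by
      rw [← Nat.cofinite_eq_atTop]
      refine (eventually_all_finite (Set.finite_Iic l)).2 fun k hk => ?_
      exact (intCast_dvd_iff (δ := β k - β l) (by positivity)
        (by rw [map_sub, hβ, hβ]; rfl)).1 (hB' k l hk)
    exact ((eventually_forall_ge_atTop.2 hclose).and
      ((RepsPolyadic.of_mk_eq (hβ l)).eventually_forall_dvd_sub (by positivity))).exists
  choose T hT_close hT_stable using hT
  let M : ℕ → ℕ := fun l => (Finset.Iic l).sup T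
  have hTM : ∀ {k l}, k ≤ l → T k ≤ M l := fun h => Finset.le_sup (Finset.mem_Iic.2 h)
  have hγ : RepsPolyadic fun k => β k (M k) := by
    intro q hq
    rw [Nat.cofinite_eq_atTop]
    filter_upwards [eventually_intCast_dvd_factorial hq] with k hk
    refine hk.trans ?_
    rw [← sub_add_sub_cancel _ (β k (M (k + 1)))]
    exact dvd_add (hT_stable k _ (hTM le_rfl) _ (hTM k.le_succ))
      (hT_close (k + 1) _ (hTM le_rfl) k k.le_succ)
  refine ⟨⟨_, _, hγ, rfl⟩, fun k => (intCast_dvd_iff (δ := β k - fun j => β j (M j))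
    (by positivity) (by rw [map_sub, hβ]; rfl)).2 ?_⟩
  rw [Nat.cofinite_eq_atTop]
  filter_upwards [eventually_ge_atTop k, eventually_ge_atTop (T k)] with j hkj hTj
  rw [Pi.sub_apply, ← sub_add_sub_cancel _ (β k (M j))]
  exact dvd_add (hT_stable k _ hTj _ (hTM hkj)) (hT_close j _ (hTM le_rfl) k hkj)

theorem exists_forall_intCast_dvd_sub_of_sub_succ {A : ℕ → ↥Polyadic}
    (hA : ∀ p : ℤ, 0 < p → ∀ᶠ n in cofinite, (p : ↥Polyadic) ∣ A n - A (n + 1)) :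
    ∃ a : ↥Polyadic, ∀ p : ℤ, 0 < p →
      ∀ᶠ n in cofinite, (p : ↥Polyadic) ∣ A n - a := by
  have hN : ∀ k : ℕ, ∃ N, ∀ n ≥ N, ((k ! : ℤ) : ↥Polyadic) ∣ A N - A n := fun k =>
    let ⟨N, hN⟩ := eventually_atTop.1 (Nat.cofinite_eq_atTop ▸ hA _ (by positivity))
    ⟨N, fun _ => dvd_sub_of_forall_dvd_sub_succ hN⟩
  choose N hN using hN
  obtain ⟨b, hb⟩ := exists_forall_factorial_dvd_sub (B := fun k => A (N k)) fun k => by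
    have hsucc := (Int.cast_dvd_cast (k ! : ℤ) _
      (by exact_mod_cast factorial_dvd_factorial k.le_succ)).trans
        (hN (k + 1) _ (le_max_right (N k) _))
    simpa using dvd_sub (hN k _ (le_max_left _ (N (k + 1)))) hsucc
  refine ⟨b, fun p hp => ?_⟩
  obtain ⟨k, hk⟩ := (eventually_intCast_dvd_factorial hp).exists
  rw [Nat.cofinite_eq_atTop]
  filter_upwards [eventually_ge_atTop (N k)] with n hn
  exact (Int.cast_dvd_cast _ _ hk).trans (by simpa using dvd_sub (hb k) (hN k n hn))

end Polyadic

/-- A sequence of polyadic numbers converges in `(𝒫, σ)` (to some limit `a`,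
meaning every zero neighborhood `𝒢⁽ᵖ⁾` contains `A n − a` for all but finitely
many `n`) if and only if the consecutive differences `A n − A (n+1)` tend to
zero. -/
theorem polyadic_converges_iff_consecutive_differences
    (A : ℕ → ↥Polyadic) :
    (∃ a : ↥Polyadic, ∀ p : ℤ, 0 < p →
        ∀ᶠ n in Filter.cofinite, A n - a ∈ GIdl p) ↔
    (∀ p : ℤ, 0 < p →
        ∀ᶠ n in Filter.cofinite, A n - A (n + 1) ∈ GIdl p) := by
  simp only [Polyadic.mem_GIdl_iff_dvd]
  refine ⟨fun ⟨a, ha⟩ p hp => ?_, Polyadic.exists_forall_intCast_dvd_sub_of_sub_succ⟩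
  filter_upwards [ha p hp, (add_left_injective 1).tendsto_cofinite.eventually (ha p hp)]
    with n h h'
  simpa using dvd_sub h h'
end

section
/- A sequence α : ℕ → ℤ is an absolute stabilizer (i.e., there exists an integer m such that for every periodic function u : ℤ → ℂ the sequence k ↦ u(α_k) is eventually equal to u(m)) if and only if α represents an integer polyadic number, i.e., there exists an integer m such that the sequence k ↦ α_k − m is a 0-sequence (for every positive integer n, n divides α_k − m for all but finitely many k). Moreover, for an absolute stabilizer the integer m with this property is unique. -/
/-!
The residue map `x ↦ x % n` is periodic, so an absolute stabilizer with value `m` is eventually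
congruent to `m` modulo every `n`. Conversely, a periodic function with period `p` is constant on
residue classes modulo `p`. Two values `m, m'` are then congruent modulo every `n`, and taking
`n = |m - m'| + 1` forces `m = m'`.
-/

/-- `α` is an absolute stabilizer with value `m`: for every periodic function
`u : ℤ → ℂ`, the sequence `k ↦ u (α k)` is eventually equal to `u m`. -/
def IsAbsoluteStabilizerAt (α : ℕ → ℤ) (m : ℤ) : Prop :=
  ∀ u : ℤ → ℂ, (∃ p : ℤ, 0 < p ∧ Function.Periodic u p) →
    ∀ᶠ k in Filter.cofinite, u (α k) = u m

/-- `α` represents the integer polyadic number with value `m`: the sequence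
`k ↦ α k − m` is a `0`-sequence. -/
def RepsIntegerPolyadicAt (α : ℕ → ℤ) (m : ℤ) : Prop :=
  ∀ n : ℤ, 0 < n → ∀ᶠ k in Filter.cofinite, n ∣ α k - m

lemma Function.Periodic.eq_of_dvd_sub {β : Type*} {u : ℤ → β} {p : ℤ} (hu : Function.Periodic u p)
    {a b : ℤ} (hab : p ∣ b - a) : u b = u a := by
  obtain ⟨c, hc⟩ := hab
  rw [show b = a + c * p by linarith [mul_comm p c]]
  exact hu.int_mul c a

lemma periodic_intEmod (n : ℤ) : Function.Periodic (fun x : ℤ => ((x % n : ℤ) : ℂ)) n := by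
  intro x
  simp

section

variable {α : ℕ → ℤ} {m : ℤ}

lemma IsAbsoluteStabilizerAt.repsIntegerPolyadicAt (h : IsAbsoluteStabilizerAt α m) :
    RepsIntegerPolyadicAt α m := by
  intro n hn
  filter_upwards [h _ ⟨n, hn, periodic_intEmod n⟩] with k hk
  have hmod : α k % n = m % n := by exact_mod_cast hk
  exact (Int.ModEq.symm hmod).dvd

lemma RepsIntegerPolyadicAt.isAbsoluteStabilizerAt (h : RepsIntegerPolyadicAt α m) :
    IsAbsoluteStabilizerAt α m := by
  rintro u ⟨p, hp, hu⟩
  filter_upwards [h p hp] with k hk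
  exact hu.eq_of_dvd_sub hk

lemma RepsIntegerPolyadicAt.unique {m' : ℤ} (h : RepsIntegerPolyadicAt α m)
    (h' : RepsIntegerPolyadicAt α m') : m = m' := by
  set n := |m - m'| + 1
  have hn : 0 < n := by positivity
  obtain ⟨k, hk, hk'⟩ := ((h n hn).and (h' n hn)).exists
  have hdvd : n ∣ m - m' := by simpa using dvd_sub hk' hk
  exact sub_eq_zero.mp (Int.eq_zero_of_abs_lt_dvd hdvd (lt_add_one _))

end

/-- A sequence is an absolute stabilizer iff it represents an integer polyadic
number; moreover the corresponding integer value is unique. -/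
theorem isAbsoluteStabilizer_iff_repsIntegerPolyadic (α : ℕ → ℤ) :
    ((∃ m : ℤ, IsAbsoluteStabilizerAt α m) ↔ (∃ m : ℤ, RepsIntegerPolyadicAt α m)) ∧
    (∀ m m' : ℤ, IsAbsoluteStabilizerAt α m → IsAbsoluteStabilizerAt α m' → m = m') :=
  ⟨⟨fun ⟨m, h⟩ => ⟨m, h.repsIntegerPolyadicAt⟩, fun ⟨m, h⟩ => ⟨m, h.isAbsoluteStabilizerAt⟩⟩,
    fun _ _ h h' => h.repsIntegerPolyadicAt.unique h'.repsIntegerPolyadicAt⟩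
end
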